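/- Let H and H' be connected graphs, and let G be obtained from H by adding, for each vertex v of H, a disjoint copy H_v of H' with every vertex of H_v joined to v by an edge. Then td(G) ≥ td(H) + td(H'). -/

import Mathlib

open Classical

variable {V : Type}

/-- Reachability within a vertex subset `s` of the graph `G`. -/
def ReachIn (G : SimpleGraph V) (s : Finset V) (u v : V) : Prop :=
  Relation.ReflTransGen (fun a b => a ∈ s ∧ b ∈ s ∧ G.Adj a b) u v

/-- The induced subgraph of `G` on `s` is (nonempty and) connected. -/
def ConnIn (G : SimpleGraph V) (s : Finset V) : Prop :=
  s.Nonempty ∧ ∀ u ∈ s, ∀ v ∈ s, ReachIn G s u v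

/-- The vertex set of the connected component of `v` in the induced subgraph on `s`. -/
noncomputable def compIn (G : SimpleGraph V) (s : Finset V) (v : V) : Finset V :=
  s.filter (fun u => ReachIn G s v u)

/-- Fuel-based recursion computing the treedepth of the induced subgraph of `G` on `s`
(correct whenever the fuel is at least `s.card`): treedepth of the null graph is `0`;
for a connected graph it is `1 + min_v td(G - v)`; otherwise the max over components. -/
noncomputable def tdAux (G : SimpleGraph V) : ℕ → Finset V → ℕ
  | 0, _ => 0
  | n+1, s =>
    if hs : s = ∅ then 0
    else if ConnIn G s then
      1 + s.inf' (Finset.nonempty_of_ne_empty hs) (fun v => tdAux G n (s.erase v))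
    else
      s.sup (fun v => tdAux G n (compIn G s v))

/-- The treedepth of the induced subgraph of `G` on the vertex set `s`. -/
noncomputable def tdOn (G : SimpleGraph V) (s : Finset V) : ℕ := tdAux G s.card s

/-- The treedepth of a finite graph. -/
noncomputable def td (G : SimpleGraph V) [Fintype V] : ℕ := tdOn G Finset.univ

/-- The graph of type `a(H, H')`: obtained from `H` by adding, for each vertex
`a` of `H`, a disjoint copy `{a} × B` of `H'` fully joined to `a`. -/
def typeA {A B : Type} (H : SimpleGraph A) (H' : SimpleGraph B) :
    SimpleGraph (A ⊕ A × B) where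
  Adj x y := match x, y with
    | Sum.inl a, Sum.inl a' => H.Adj a a'
    | Sum.inl a, Sum.inr p => a = p.1
    | Sum.inr p, Sum.inl a => p.1 = a
    | Sum.inr p, Sum.inr q => p.1 = q.1 ∧ H'.Adj p.2 q.2
  symm := by
    constructor
    rintro (a|p) (a'|q) h
    · exact H.adj_symm h
    · exact h.symm
    · exact h.symm
    · exact ⟨h.1.symm, H'.adj_symm h.2⟩
  loopless := by
    constructor
    rintro (a|p) h
    · exact H.irrefl h
    · exact H'.irrefl h.2

/-!
For `s` a vertex set of `typeA H H'` and `A₀ ⊆ A` connected in `H` with `inl A₀ ⊆ s`, we show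
`td(A₀) + m ≤ td(s)` whenever every copy `{a} × B`, `a ∈ A₀`, meets `s` in a set of treedepth
at least `m`; the theorem is the case `s = univ`, `A₀ = univ`, `m = td H'`. Induct on `s`. If `s`
is disconnected, pass to the component containing `inl A₀`. Otherwise `td(s) = td(s - v) + 1`
for some `v`. Deleting a root `a ∈ A₀` lowers `td(A₀)` by at most one and a connected piece of
`A₀ - a` carries its treedepth; if `A₀ = {a}`, the copy at `a` survives in `s - a`. Deleting a
vertex of a copy lowers the treedepth of every copy by at most one, so `m - 1` works. Any other
deletion is free. The two facts used about treedepth, monotonicity under injective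
homomorphisms and dropping by at most one when a vertex is deleted, come from the recursion.
-/

section Reachability

variable {V W : Type} {G : SimpleGraph V} {s : Finset V} {u v w : V}

lemma ReachIn.symm (h : ReachIn G s u v) : ReachIn G s v u :=
  Relation.reflTransGen_swap.2 <|
    Relation.ReflTransGen.mono (fun _ _ ⟨ha, hb, hab⟩ => ⟨hb, ha, hab.symm⟩) _ _ h

lemma ReachIn.trans (h : ReachIn G s u v) (h' : ReachIn G s v w) : ReachIn G s u w :=
  Relation.ReflTransGen.trans h h'

lemma ReachIn.map {G' : SimpleGraph W} {t : Finset W} (f : G →g G')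
    (hst : Set.MapsTo f s t) (h : ReachIn G s u v) : ReachIn G' t (f u) (f v) :=
  h.lift f fun _ _ ⟨ha, hb, hab⟩ => ⟨hst ha, hst hb, f.map_adj hab⟩

lemma mem_compIn : u ∈ compIn G s v ↔ u ∈ s ∧ ReachIn G s v u := Finset.mem_filter

lemma compIn_subset : compIn G s v ⊆ s := Finset.filter_subset _ _

lemma self_mem_compIn (hv : v ∈ s) : v ∈ compIn G s v :=
  mem_compIn.2 ⟨hv, Relation.ReflTransGen.refl⟩

lemma reachIn_compIn (h : ReachIn G s v u) : ReachIn G (compIn G s v) v u := by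
  induction h with
  | refl => exact Relation.ReflTransGen.refl
  | @tail b c hb hbc ih =>
    exact ih.tail ⟨mem_compIn.2 ⟨hbc.1, hb⟩, mem_compIn.2 ⟨hbc.2.1, hb.tail hbc⟩, hbc.2.2⟩

lemma connIn_compIn (hv : v ∈ s) : ConnIn G (compIn G s v) :=
  ⟨⟨v, self_mem_compIn hv⟩, fun _ ha _ hb =>
    (reachIn_compIn (mem_compIn.1 ha).2).symm.trans (reachIn_compIn (mem_compIn.1 hb).2)⟩

lemma compIn_ssubset (hs : ¬ ConnIn G s) (hv : v ∈ s) : compIn G s v ⊂ s := by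
  refine Finset.ssubset_iff_subset_ne.2
    ⟨compIn_subset, fun h => hs ⟨⟨v, hv⟩, fun a ha b hb => ?_⟩⟩
  rw [← h] at ha hb
  exact (mem_compIn.1 ha).2.symm.trans (mem_compIn.1 hb).2

lemma connIn_univ [Fintype V] (h : G.Connected) : ConnIn G Finset.univ :=
  ⟨@Finset.univ_nonempty _ _ h.nonempty, fun u _ v _ =>
    Relation.ReflTransGen.mono (fun _ _ hab => ⟨Finset.mem_univ _, Finset.mem_univ _, hab⟩) _ _
      ((SimpleGraph.reachable_iff_reflTransGen u v).1 (h u v))⟩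

end Reachability

section Treedepth

variable {V : Type} {G : SimpleGraph V} {s : Finset V} {v : V}

lemma tdAux_succ_eq (G : SimpleGraph V) {n : ℕ} {s : Finset V} (hs : s.card ≤ n) :
    tdAux G (n + 1) s = tdAux G n s := by
  induction n generalizing s with
  | zero => simp [Finset.card_eq_zero.1 (Nat.le_zero.1 hs), tdAux]
  | succ n ih =>
    rw [tdAux, tdAux]
    split_ifs with h₀ hc
    · rfl
    · exact congrArg (1 + ·) <| Finset.inf'_congr _ rfl fun v hv =>
        ih (by rw [Finset.card_erase_of_mem hv]; omega)
    · exact Finset.sup_congr rfl fun v hv =>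
        ih (by have := Finset.card_lt_card (compIn_ssubset hc hv); omega)

lemma tdAux_eq_tdOn (G : SimpleGraph V) {n : ℕ} {s : Finset V} (hs : s.card ≤ n) :
    tdAux G n s = tdOn G s := by
  induction n, hs using Nat.le_induction with
  | base => rfl
  | succ n hn ih => rw [tdAux_succ_eq G hn, ih]

lemma tdOn_empty (G : SimpleGraph V) : tdOn G ∅ = 0 := rfl

lemma tdOn_of_connIn [DecidableEq V] (hs : ConnIn G s) :
    tdOn G s = 1 + s.inf' hs.1 fun v => tdOn G (s.erase v) := by
  obtain ⟨k, hk⟩ := Nat.exists_eq_add_one.2 (Finset.card_pos.2 hs.1)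
  rw [tdOn, hk, tdAux, dif_neg hs.1.ne_empty, if_pos hs]
  refine congrArg (1 + ·) <| Finset.inf'_congr _ rfl fun v hv => ?_
  convert tdAux_eq_tdOn G (n := k) (s := s.erase v)
    (by rw [Finset.card_erase_of_mem hv]; omega)

lemma tdOn_of_not_connIn (hs : ¬ ConnIn G s) :
    tdOn G s = s.sup fun v => tdOn G (compIn G s v) := by
  rcases s.eq_empty_or_nonempty with rfl | hne
  · rfl
  obtain ⟨k, hk⟩ := Nat.exists_eq_add_one.2 (Finset.card_pos.2 hne)
  rw [tdOn, hk, tdAux, dif_neg hne.ne_empty, if_neg hs]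
  refine Finset.sup_congr rfl fun v hv => tdAux_eq_tdOn G ?_
  have := Finset.card_lt_card (compIn_ssubset hs hv); omega

lemma exists_tdOn_eq_of_connIn [DecidableEq V] (hs : ConnIn G s) :
    ∃ v ∈ s, tdOn G s = tdOn G (s.erase v) + 1 := by
  obtain ⟨v, hv, hmin⟩ := Finset.exists_mem_eq_inf' hs.1 fun v => tdOn G (s.erase v)
  refine ⟨v, hv, ?_⟩
  rw [tdOn_of_connIn hs, hmin, add_comm]

lemma tdOn_le_of_connIn [DecidableEq V] (hs : ConnIn G s) (hv : v ∈ s) :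
    tdOn G s ≤ tdOn G (s.erase v) + 1 := by
  rw [tdOn_of_connIn hs, add_comm]
  exact Nat.add_le_add_right (Finset.inf'_le _ hv) 1

lemma tdOn_compIn_le (hs : ¬ ConnIn G s) (hv : v ∈ s) :
    tdOn G (compIn G s v) ≤ tdOn G s :=
  (tdOn_of_not_connIn hs).symm ▸ Finset.le_sup (f := fun v => tdOn G (compIn G s v)) hv

lemma exists_connIn_tdOn_le (hs : s.Nonempty) : ∃ C ⊆ s, ConnIn G C ∧ tdOn G s ≤ tdOn G C := by
  by_cases hc : ConnIn G s
  · exact ⟨s, subset_rfl, hc, le_rfl⟩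
  obtain ⟨v, hv, hmax⟩ := Finset.exists_mem_eq_sup s hs fun v => tdOn G (compIn G s v)
  exact ⟨compIn G s v, compIn_subset, connIn_compIn hv, (tdOn_of_not_connIn hc).trans hmax |>.le⟩

end Treedepth

section Monotone

variable {V W : Type} {G : SimpleGraph V} {G' : SimpleGraph W}

lemma tdOn_le_of_hom (f : G →g G') (hf : Function.Injective f) {s : Finset V} {t : Finset W}
    (hst : Set.MapsTo f s t) : tdOn G s ≤ tdOn G' t := by
  -- the disconnected cases shrink only one of `s`, `t`
  induction hn : s.card + t.card using Nat.strong_induction_on generalizing s t with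
  | _ n IH =>
  subst hn
  by_cases hs : ConnIn G s
  swap
  · rw [tdOn_of_not_connIn hs]
    refine Finset.sup_le fun v hv => ?_
    have := Finset.card_lt_card (compIn_ssubset hs hv)
    exact IH _ (by omega) (fun x hx => hst (compIn_subset hx)) rfl
  obtain ⟨x₀, hx₀⟩ := hs.1
  by_cases ht : ConnIn G' t
  swap
  · have hmaps : Set.MapsTo f s (compIn G' t (f x₀)) := fun x hx =>
      mem_compIn.2 ⟨hst hx, (hs.2 x₀ hx₀ x hx).map f hst⟩
    have := Finset.card_lt_card (compIn_ssubset ht (hst hx₀))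
    exact (IH _ (by omega) hmaps rfl).trans (tdOn_compIn_le ht (hst hx₀))
  obtain ⟨w, hw, htw⟩ := exists_tdOn_eq_of_connIn ht
  rw [htw]
  by_cases hws : ∃ x ∈ s, f x = w
  · obtain ⟨x, hx, rfl⟩ := hws
    have hmaps : Set.MapsTo f (s.erase x) (t.erase (f x)) := fun y hy =>
      Finset.mem_erase.2 ⟨hf.ne (Finset.ne_of_mem_erase hy), hst (Finset.mem_of_mem_erase hy)⟩
    have := Finset.card_erase_lt_of_mem hx
    have := Finset.card_erase_lt_of_mem (hst hx)
    exact (tdOn_le_of_connIn hs hx).trans (Nat.add_le_add_right (IH _ (by omega) hmaps rfl) 1)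
  · push Not at hws
    have hmaps : Set.MapsTo f s (t.erase w) := fun y hy => Finset.mem_erase.2 ⟨hws y hy, hst hy⟩
    have := Finset.card_erase_lt_of_mem hw
    exact (IH _ (by omega) hmaps rfl).trans (Nat.le_succ _)

lemma tdOn_mono {s t : Finset V} (h : s ⊆ t) : tdOn G s ≤ tdOn G t :=
  tdOn_le_of_hom SimpleGraph.Hom.id Function.injective_id fun _ hx => h hx

lemma tdOn_le_tdOn_erase_add_one [DecidableEq V] (s : Finset V) (v : V) :
    tdOn G s ≤ tdOn G (s.erase v) + 1 := by
  by_cases hs : ConnIn G s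
  · by_cases hv : v ∈ s
    · exact tdOn_le_of_connIn hs hv
    · rw [Finset.erase_eq_of_notMem hv]; exact Nat.le_succ _
  rw [tdOn_of_not_connIn hs]
  refine Finset.sup_le fun u hu => ?_
  by_cases hv : v ∈ compIn G s u
  · exact (tdOn_le_of_connIn (connIn_compIn hu) hv).trans
      (Nat.add_le_add_right (tdOn_mono (Finset.erase_subset_erase v compIn_subset)) 1)
  · refine (tdOn_mono fun y hy => Finset.mem_erase.2 ⟨?_, compIn_subset hy⟩).trans (Nat.le_succ _)
    rintro rfl; exact hv hy

end Monotone

namespace typeA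

variable {A B : Type} {H : SimpleGraph A} {H' : SimpleGraph B}

def inlHom : H →g typeA H H' := ⟨Sum.inl, id⟩

def inrHom (a : A) : H' →g typeA H H' := ⟨fun b => Sum.inr (a, b), fun h => ⟨rfl, h⟩⟩

lemma inrHom_injective (a : A) : Function.Injective (inrHom a : H' →g typeA H H') :=
  fun _ _ h => (Prod.mk.inj (Sum.inr_injective h)).2

noncomputable def fiber (s : Finset (A ⊕ A × B)) (a : A) : Finset B :=
  s.preimage (fun b => Sum.inr (a, b)) fun _ _ _ _ h => (Prod.mk.inj (Sum.inr_injective h)).2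

@[simp]
lemma mem_fiber {s : Finset (A ⊕ A × B)} {a : A} {b : B} : b ∈ fiber s a ↔ Sum.inr (a, b) ∈ s :=
  Finset.mem_preimage

lemma fiber_erase_inl (s : Finset (A ⊕ A × B)) (a x : A) :
    fiber (s.erase (Sum.inl a)) x = fiber s x := by
  ext; simp

lemma erase_fiber_subset_fiber_erase (s : Finset (A ⊕ A × B)) (p : A × B) (x : A) :
    (fiber s x).erase p.2 ⊆ fiber (s.erase (Sum.inr p)) x := by
  intro b; simp only [Finset.mem_erase, mem_fiber]; grind

lemma tdOn_fiber_le (s : Finset (A ⊕ A × B)) (a : A) :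
    tdOn H' (fiber s a) ≤ tdOn (typeA H H') (s.erase (Sum.inl a)) :=
  tdOn_le_of_hom (inrHom a) (inrHom_injective a) fun _ hb =>
    Finset.mem_erase.2 ⟨Sum.inr_ne_inl, mem_fiber.1 hb⟩

theorem tdOn_add_le_tdOn_of_le_tdOn_fiber (s : Finset (A ⊕ A × B)) {A₀ : Finset A} {m : ℕ}
    (hA₀ : ConnIn H A₀) (hA₀s : ∀ a ∈ A₀, Sum.inl a ∈ s) (hm : ∀ a ∈ A₀, m ≤ tdOn H' (fiber s a)) :
    tdOn H A₀ + m ≤ tdOn (typeA H H') s := by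
  induction s using Finset.strongInduction generalizing A₀ m with
  | H s IH =>
  obtain ⟨a₀, ha₀⟩ := hA₀.1
  by_cases hs : ConnIn (typeA H H') s
  swap
  · have hreach : ∀ a ∈ A₀, ReachIn (typeA H H') s (.inl a₀) (.inl a) := fun a ha =>
      (hA₀.2 a₀ ha₀ a ha).map inlHom hA₀s
    refine (IH _ (compIn_ssubset hs (hA₀s a₀ ha₀)) hA₀
      (fun a ha => mem_compIn.2 ⟨hA₀s a ha, hreach a ha⟩)
      (fun a ha => (hm a ha).trans (tdOn_mono fun b hb => ?_))).trans
      (tdOn_compIn_le hs (hA₀s a₀ ha₀))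
    rw [mem_fiber] at hb ⊢
    exact mem_compIn.2 ⟨hb, (hreach a ha).tail ⟨hA₀s a ha, hb, rfl⟩⟩
  obtain ⟨v, hv, hsv⟩ := exists_tdOn_eq_of_connIn hs
  have hlt := Finset.erase_ssubset hv
  rw [hsv]
  rcases v with a | p
  · have hm' : ∀ x ∈ A₀, m ≤ tdOn H' (fiber (s.erase (.inl a)) x) := by
      simpa only [fiber_erase_inl] using hm
    have hA₀a := tdOn_le_tdOn_erase_add_one (G := H) A₀ a
    by_cases ha : a ∈ A₀
    · rcases (A₀.erase a).eq_empty_or_nonempty with hE | hne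
      · rw [hE, tdOn_empty] at hA₀a
        have := (hm a ha).trans (tdOn_fiber_le (H := H) s a)
        omega
      obtain ⟨C, hC, hCconn, hCtd⟩ := exists_connIn_tdOn_le hne
      have := IH _ hlt hCconn (fun x hx => ?_) fun x hx => hm' x (Finset.mem_of_mem_erase (hC hx))
      · omega
      exact Finset.mem_erase.2 ⟨Sum.inl_injective.ne (Finset.ne_of_mem_erase (hC hx)),
        hA₀s x (Finset.mem_of_mem_erase (hC hx))⟩
    · have := IH _ hlt hA₀ (fun x hx => Finset.mem_erase.2 ⟨by rintro ⟨⟩; exact ha hx, hA₀s x hx⟩)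
        hm'
      omega
  · have := IH _ hlt (m := m - 1) hA₀
      (fun x hx => Finset.mem_erase.2 ⟨Sum.inl_ne_inr, hA₀s x hx⟩) fun x hx => ?_
    · omega
    have := (hm x hx).trans (tdOn_le_tdOn_erase_add_one (fiber s x) p.2)
    have := tdOn_mono (G := H') (erase_fiber_subset_fiber_erase s p x)
    omega

end typeA

theorem td_typeA_general {A B : Type} [Fintype A] [Fintype B]
    (H : SimpleGraph A) (H' : SimpleGraph B) (hH : H.Connected) :
    td H + td H' ≤ td (typeA H H') :=
  typeA.tdOn_add_le_tdOn_of_le_tdOn_fiber Finset.univ (connIn_univ hH)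
    (fun _ _ => Finset.mem_univ _) fun _ _ => tdOn_mono fun _ _ => typeA.mem_fiber.2 (Finset.mem_univ _)

theorem td_typeA {A B : Type} [Fintype A] [Fintype B]
    (H : SimpleGraph A) (H' : SimpleGraph B) (hH : H.Connected) (hH' : H'.Connected) :
    td H + td H' ≤ td (typeA H H') :=
  td_typeA_general H H' hH
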